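/- With LN defined as LN(x) = γ ⊙ ((x − x̄𝟙)/s(x)) + β where s(x) = √((1/d)‖x − x̄𝟙‖² + ε) and ε > 0, if ‖γ‖_∞ ≤ γ_max, then the operator norm of the Jacobian of LN at any x ∈ ℝ^d is at most 2γ_max/s(x). -/

import Mathlib

/-!
LayerNorm factors as `x ↦ diag(γ) N(P x) + β`, where `P` is the orthogonal projection onto the
complement of `𝟙` and `N(u) = u / s(u)` with `s(u) = √(‖u‖²/d + ε)` is RMS normalization. By
the chain rule the Jacobian is `diag(γ) ∘ N'(P x) ∘ P`, with `‖diag(γ)‖ = ‖γ‖_∞ ≤ γ_max`,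
`‖P‖ ≤ 1`, and `N'(u) = s⁻¹ (I - u uᵀ / (d s²))`, whose norm is at most `2 / s` because
`‖u‖² ≤ d s²`.
-/

/-- Centering: `(P x)_i = x_i − x̄` with `x̄ = (1/d)∑ⱼ xⱼ`. -/
noncomputable def lnP (d : ℕ) (x : Fin d → ℝ) : Fin d → ℝ :=
  fun i => x i - (∑ j, x j) / d

/-- `s(x) = √((1/d)‖Px‖² + ε)`. -/
noncomputable def lnS (d : ℕ) (ε : ℝ) (x : Fin d → ℝ) : ℝ :=
  Real.sqrt ((∑ i, (lnP d x i) ^ 2) / d + ε)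

/-- LayerNorm: `LN(x) = γ ⊙ (Px/s(x)) + β`, viewed as a map of Euclidean spaces. -/
noncomputable def layerNorm (d : ℕ) (ε : ℝ) (γ β : Fin d → ℝ) :
    EuclideanSpace ℝ (Fin d) → EuclideanSpace ℝ (Fin d) :=
  fun x => WithLp.toLp 2 (fun i => γ i * (lnP d x i / lnS d ε x) + β i)

open InnerProductSpace Matrix

section RMSNormalization

variable {F : Type*} [NormedAddCommGroup F] [InnerProductSpace ℝ F] {c ε : ℝ}

noncomputable def rmsScale (c ε : ℝ) (u : F) : ℝ := √(‖u‖ ^ 2 / c + ε)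

noncomputable def rmsNormalize (c ε : ℝ) (u : F) : F := (rmsScale c ε u)⁻¹ • u

omit [InnerProductSpace ℝ F] in
lemma rmsScale_pos (hc : 0 ≤ c) (hε : 0 < ε) (u : F) : 0 < rmsScale c ε u :=
  Real.sqrt_pos.2 (by positivity)

omit [InnerProductSpace ℝ F] in
lemma norm_sq_le_mul_rmsScale_sq (hc : 0 < c) (hε : 0 ≤ ε) (u : F) :
    ‖u‖ ^ 2 ≤ c * rmsScale c ε u ^ 2 := by
  rw [rmsScale, Real.sq_sqrt (by positivity), mul_add, mul_div_cancel₀ _ hc.ne']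
  nlinarith

theorem hasFDerivAt_rmsNormalize (hc : 0 ≤ c) (hε : 0 < ε) (u : F) :
    HasFDerivAt (rmsNormalize c ε)
      ((rmsScale c ε u)⁻¹ •
        (ContinuousLinearMap.id ℝ F - (c * rmsScale c ε u ^ 2)⁻¹ • rankOne ℝ u u)) u := by
  have hs := rmsScale_pos hc hε u
  have hscale : HasFDerivAt (rmsScale c ε)
      ((1 / (2 * rmsScale c ε u)) • c⁻¹ • 2 • innerSL ℝ u) u := by
    unfold rmsScale
    simp only [div_eq_mul_inv (‖_‖ ^ 2)]
    exact (((hasStrictFDerivAt_norm_sq u).hasFDerivAt.mul_const c⁻¹).add_const ε).sqrt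
      (by positivity)
  refine (((hasDerivAt_inv hs.ne').comp_hasFDerivAt u hscale).smul
    (hasFDerivAt_id u)).congr_fderiv ?_
  ext v
  simp only [Function.comp_apply, one_div, _root_.mul_inv_rev, neg_smul, id_eq,
    _root_.add_apply, _root_.smul_apply, ContinuousLinearMap.id_apply,
    ContinuousLinearMap.smulRight_apply, _root_.neg_apply, coe_innerSL_apply,
    nsmul_eq_mul, Nat.cast_ofNat, smul_eq_mul, _root_.sub_apply, rankOne_apply]
  rw [smul_sub, smul_smul, smul_smul, sub_eq_add_neg]
  congr 2
  field_simp

theorem norm_fderiv_rmsNormalize_le (hc : 0 < c) (hε : 0 < ε) (u : F) :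
    ‖fderiv ℝ (rmsNormalize c ε) u‖ ≤ 2 / rmsScale c ε u := by
  set s := rmsScale c ε u
  have hs : 0 < s := rmsScale_pos hc.le hε u
  have hrankOne : ‖(c * s ^ 2)⁻¹ • rankOne ℝ u u‖ ≤ 1 := by
    rw [norm_smul, norm_rankOne, norm_inv, Real.norm_of_nonneg (by positivity), ← sq]
    exact inv_mul_le_one_of_le₀ (norm_sq_le_mul_rmsScale_sq hc hε.le u) (by positivity)
  rw [(hasFDerivAt_rmsNormalize hc.le hε u).fderiv, norm_smul, norm_inv,
    Real.norm_of_nonneg hs.le, inv_mul_le_iff₀ hs, mul_div_cancel₀ _ hs.ne']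
  calc _ ≤ ‖ContinuousLinearMap.id ℝ F‖ + ‖(c * s ^ 2)⁻¹ • rankOne ℝ u u‖ := norm_sub_le _ _
    _ ≤ 1 + 1 := add_le_add ContinuousLinearMap.norm_id_le hrankOne
    _ = 2 := one_add_one_eq_two

end RMSNormalization

noncomputable def centering (d : ℕ) : EuclideanSpace ℝ (Fin d) →L[ℝ] EuclideanSpace ℝ (Fin d) :=
  (ℝ ∙ WithLp.toLp 2 (fun _ => 1))ᗮ.starProjection

lemma centering_apply (d : ℕ) (x : EuclideanSpace ℝ (Fin d)) :
    centering d x = WithLp.toLp 2 (lnP d x) := by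
  ext i
  simp [centering, Submodule.starProjection_singleton, lnP, EuclideanSpace.real_norm_sq_eq,
    PiLp.inner_apply]

lemma norm_centering_le (d : ℕ) : ‖centering d‖ ≤ 1 :=
  Submodule.starProjection_norm_le _

lemma lnS_eq_rmsScale (d : ℕ) (ε : ℝ) (x : EuclideanSpace ℝ (Fin d)) :
    lnS d ε x = rmsScale d ε (centering d x) := by
  rw [lnS, rmsScale, centering_apply, EuclideanSpace.real_norm_sq_eq]

lemma layerNorm_eq (d : ℕ) (ε : ℝ) (γ β : Fin d → ℝ) :
    layerNorm d ε γ β = fun x =>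
      toEuclideanCLM (𝕜 := ℝ) (diagonal γ) (rmsNormalize d ε (centering d x)) +
        WithLp.toLp 2 β := by
  funext x
  ext i
  simp only [layerNorm, lnS_eq_rmsScale, centering_apply, rmsNormalize, map_smul,
    toEuclideanCLM_toLp, PiLp.add_apply, PiLp.smul_apply, mulVec_diagonal, smul_eq_mul,
    add_left_inj]
  ring

lemma hasFDerivAt_layerNorm (d : ℕ) {ε : ℝ} (hε : 0 < ε) (γ β : Fin d → ℝ)
    (x : EuclideanSpace ℝ (Fin d)) :
    HasFDerivAt (layerNorm d ε γ β)
      (toEuclideanCLM (𝕜 := ℝ) (diagonal γ) ∘L fderiv ℝ (rmsNormalize d ε) (centering d x) ∘L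
        centering d) x := by
  have hN := (hasFDerivAt_rmsNormalize (Nat.cast_nonneg d) hε (centering d x)).differentiableAt
  rw [layerNorm_eq]
  exact ((toEuclideanCLM (𝕜 := ℝ) (diagonal γ)).hasFDerivAt.comp x
    (hN.hasFDerivAt.comp x (centering d).hasFDerivAt)).add_const _

open scoped Matrix.Norms.L2Operator in
lemma norm_toEuclideanCLM_diagonal_le {ι : Type*} [Fintype ι] [DecidableEq ι] {γ : ι → ℝ}
    {C : ℝ} (hC : 0 ≤ C) (hγ : ∀ i, |γ i| ≤ C) :
    ‖toEuclideanCLM (𝕜 := ℝ) (diagonal γ)‖ ≤ C := by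
  rw [l2_opNorm_toEuclideanCLM, l2_opNorm_diagonal]
  exact (pi_norm_le_iff_of_nonneg hC).2 fun i => (Real.norm_eq_abs _).trans_le (hγ i)

/-- If `‖γ‖_∞ ≤ γ_max`, the operator norm of the LayerNorm Jacobian is at most
`2γ_max/s(x)`. -/
theorem layerNorm_jacobian_opNorm_le (d : ℕ) (hd : 0 < d) (ε : ℝ) (hε : 0 < ε)
    (γ β : Fin d → ℝ) (γmax : ℝ) (hγ : ∀ i, |γ i| ≤ γmax)
    (x : EuclideanSpace ℝ (Fin d)) :
    ‖fderiv ℝ (layerNorm d ε γ β) x‖ ≤ 2 * γmax / lnS d ε x := by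
  set D := toEuclideanCLM (𝕜 := ℝ) (diagonal γ)
  set P := centering d
  set N' := fderiv ℝ (rmsNormalize d ε) (P x)
  have hdR : (0 : ℝ) < d := Nat.cast_pos.2 hd
  have hγmax : 0 ≤ γmax := (abs_nonneg _).trans (hγ ⟨0, hd⟩)
  have hs := rmsScale_pos hdR.le hε (P x)
  rw [(hasFDerivAt_layerNorm d hε γ β x).fderiv, lnS_eq_rmsScale, mul_comm, mul_div_assoc]
  calc ‖D ∘L N' ∘L P‖ ≤ ‖D‖ * (‖N'‖ * ‖P‖) :=
        (D.opNorm_comp_le _).trans (by gcongr; exact N'.opNorm_comp_le P)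
    _ ≤ γmax * (2 / rmsScale d ε (P x) * 1) :=
        mul_le_mul (norm_toEuclideanCLM_diagonal_le hγmax hγ)
          (mul_le_mul (norm_fderiv_rmsNormalize_le hdR hε _) (norm_centering_le d)
            (norm_nonneg _) (div_pos two_pos hs).le) (by positivity) hγmax
    _ = γmax * (2 / rmsScale d ε (P x)) := by rw [mul_one]
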